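/- A subset A of ℝ is bounded if and only if both A and −A = {−a : a ∈ A} are ρ-statistically downward compact. -/

import Mathlib

/-! Every sequence in a bounded set has a convergent subsequence, whose steps are eventually below
any `ε`; only finitely many steps are then counted, and a bounded count divided by `ρ n → ∞` tends
to `0`. Conversely, a set unbounded above contains a sequence climbing by at least `1` at every
step; every subsequence of it has all `n + 1` steps up to `n` counted for `ε = 1`, and
`(n + 1) / ρ n` stays away from `0` because `ρ n = O(n)`. Unboundedness below is unboundedness
above of `-A`. -/

open Filter Pointwise

/-- Number of indices `k ≤ n` with `α (k+1) - α k ≥ ε`. -/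
noncomputable def dCount (α : ℕ → ℝ) (ε : ℝ) (n : ℕ) : ℕ :=
  ((Finset.range (n + 1)).filter (fun k => ε ≤ α (k + 1) - α k)).card

/-- Number of indices `k ≤ n` with `|α (k+1) - α k| ≥ ε`. -/
noncomputable def aCount (α : ℕ → ℝ) (ε : ℝ) (n : ℕ) : ℕ :=
  ((Finset.range (n + 1)).filter (fun k => ε ≤ |α (k + 1) - α k|)).card

/-- Number of indices `k ≤ n` with `|α k - L| ≥ ε`. -/
noncomputable def cCount (α : ℕ → ℝ) (L ε : ℝ) (n : ℕ) : ℕ :=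
  ((Finset.range (n + 1)).filter (fun k => ε ≤ |α k - L|)).card

/-- `α` is ρ-statistically downward quasi-Cauchy. -/
def RDQC (ρ α : ℕ → ℝ) : Prop :=
  ∀ ε : ℝ, 0 < ε → Tendsto (fun n => (dCount α ε n : ℝ) / ρ n) atTop (nhds 0)

/-- `α` is ρ-statistically quasi-Cauchy (with absolute value). -/
def RQC (ρ α : ℕ → ℝ) : Prop :=
  ∀ ε : ℝ, 0 < ε → Tendsto (fun n => (aCount α ε n : ℝ) / ρ n) atTop (nhds 0)

/-- `α` is ρ-statistically convergent to `L`. -/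
def RStatConv (ρ α : ℕ → ℝ) (L : ℝ) : Prop :=
  ∀ ε : ℝ, 0 < ε → Tendsto (fun n => (cCount α L ε n : ℝ) / ρ n) atTop (nhds 0)

/-- `E` is ρ-statistically downward compact. -/
def DCompact (ρ : ℕ → ℝ) (E : Set ℝ) : Prop :=
  ∀ α : ℕ → ℝ, (∀ k, α k ∈ E) → ∃ φ : ℕ → ℕ, StrictMono φ ∧ RDQC ρ (α ∘ φ)

/-- `f` is ρ-statistically downward continuous on `E`. -/
def DownCont (ρ : ℕ → ℝ) (E : Set ℝ) (f : ℝ → ℝ) : Prop :=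
  ∀ α : ℕ → ℝ, (∀ k, α k ∈ E) → RDQC ρ α → RDQC ρ (fun k => f (α k))

open Topology

section Counting

variable {α : ℕ → ℝ} {ε : ℝ}

theorem dCount_le_of_forall_ge {N : ℕ} (hN : ∀ k ≥ N, α (k + 1) - α k < ε) (n : ℕ) :
    dCount α ε n ≤ N := by
  calc dCount α ε n ≤ (Finset.range N).card := by
        refine Finset.card_le_card fun k hk => ?_
        simp only [Finset.mem_filter, Finset.mem_range] at hk ⊢
        by_contra! hkN
        exact (hN k hkN).not_ge hk.2
    _ = N := Finset.card_range N

theorem dCount_eq_of_forall_le (h : ∀ k, ε ≤ α (k + 1) - α k) (n : ℕ) :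
    dCount α ε n = n + 1 := by
  rw [dCount, Finset.filter_true_of_mem fun k _ => h k, Finset.card_range]

end Counting

section Statistical

variable {ρ α : ℕ → ℝ}

theorem RDQC.of_eventually_sub_lt (hpos : ∀ n, 0 < ρ n) (htop : Tendsto ρ atTop atTop)
    (h : ∀ ε > 0, ∀ᶠ k in atTop, α (k + 1) - α k < ε) : RDQC ρ α := by
  intro ε hε
  obtain ⟨N, hN⟩ := (h ε hε).exists_forall_of_atTop
  refine squeeze_zero (fun n => by positivity [hpos n]) (fun n => ?_)
    (tendsto_const_nhds.div_atTop htop : Tendsto (fun n => (N : ℝ) / ρ n) atTop (𝓝 0))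
  gcongr
  · exact (hpos n).le
  · exact_mod_cast dCount_le_of_forall_ge hN n

theorem RDQC.of_tendsto (hpos : ∀ n, 0 < ρ n) (htop : Tendsto ρ atTop atTop) {L : ℝ}
    (hα : Tendsto α atTop (𝓝 L)) : RDQC ρ α := by
  have hsteps : Tendsto (fun k => α (k + 1) - α k) atTop (𝓝 0) := by
    simpa using (hα.comp (tendsto_add_atTop_nat 1)).sub hα
  exact .of_eventually_sub_lt hpos htop fun ε hε => hsteps.eventually (gt_mem_nhds hε)

theorem not_tendsto_succ_div_zero (hpos : ∀ n, 0 < ρ n)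
    (hratio : ∃ C : ℝ, ∀ᶠ n in atTop, ρ n / (n : ℝ) ≤ C) :
    ¬ Tendsto (fun n : ℕ => ((n : ℝ) + 1) / ρ n) atTop (𝓝 0) := by
  intro h
  obtain ⟨C, hC⟩ := hratio
  have hinv : Tendsto (fun n : ℕ => ρ n / ((n : ℝ) + 1)) atTop atTop := by
    have hpos' : ∀ n : ℕ, 0 < ((n : ℝ) + 1) / ρ n := fun n => by positivity [hpos n]
    simpa only [Pi.inv_def, inv_div] using
      (tendsto_nhdsWithin_of_tendsto_nhds_of_eventually_within _ h
        (Eventually.of_forall hpos')).inv_tendsto_nhdsGT_zero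
  have hdom : ∀ᶠ n : ℕ in atTop, ρ n / ((n : ℝ) + 1) ≤ ρ n / n := by
    filter_upwards [eventually_ge_atTop 1] with n hn
    have : (0 : ℝ) < n := by exact_mod_cast hn
    gcongr
    · exact (hpos n).le
    · linarith
  obtain ⟨n, hgt, hle⟩ := ((tendsto_atTop_mono' _ hdom hinv).eventually_gt_atTop C).and hC |>.exists
  exact hgt.not_ge hle

theorem not_rdqc_of_forall_one_le_sub (hpos : ∀ n, 0 < ρ n)
    (hratio : ∃ C : ℝ, ∀ᶠ n in atTop, ρ n / (n : ℝ) ≤ C) (h : ∀ k, 1 ≤ α (k + 1) - α k) :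
    ¬ RDQC ρ α := by
  intro hα
  refine not_tendsto_succ_div_zero hpos hratio ?_
  simpa [dCount_eq_of_forall_le h] using hα 1 one_pos

end Statistical

theorem exists_seq_mem_add_one_le_of_not_bddAbove {E : Set ℝ} (hE : ¬ BddAbove E) :
    ∃ α : ℕ → ℝ, (∀ k, α k ∈ E) ∧ ∀ k, α k + 1 ≤ α (k + 1) := by
  choose f hfE hf using not_bddAbove_iff.mp hE
  refine ⟨fun k => (fun a => f (a + 1))^[k] (f 0), fun k => ?_, fun k => ?_⟩
  · cases k with
    | zero => exact hfE 0
    | succ k => simp only [Function.iterate_succ_apply', hfE]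
  · simp only [Function.iterate_succ_apply']
    exact (hf _).le

theorem DCompact.of_isBounded {ρ : ℕ → ℝ} (hpos : ∀ n, 0 < ρ n) (htop : Tendsto ρ atTop atTop)
    {E : Set ℝ} (hE : Bornology.IsBounded E) : DCompact ρ E := by
  intro α hα
  obtain ⟨L, -, φ, hφ, hconv⟩ := tendsto_subseq_of_bounded hE hα
  exact ⟨φ, hφ, .of_tendsto hpos htop hconv⟩

theorem DCompact.bddAbove {ρ : ℕ → ℝ} (hpos : ∀ n, 0 < ρ n)
    (hratio : ∃ C : ℝ, ∀ᶠ n in atTop, ρ n / (n : ℝ) ≤ C) {E : Set ℝ} (hE : DCompact ρ E) :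
    BddAbove E := by
  by_contra hE'
  obtain ⟨α, hαE, hstep⟩ := exists_seq_mem_add_one_le_of_not_bddAbove hE'
  have hmono : Monotone α := monotone_nat_of_le_succ fun k => by linarith [hstep k]
  obtain ⟨φ, hφ, hrdqc⟩ := hE α hαE
  refine not_rdqc_of_forall_one_le_sub hpos hratio (fun k => ?_) hrdqc
  have hclimb := hmono (hφ (Nat.lt_succ_self k))
  simp only [Function.comp_apply]
  linarith [hstep (φ k)]

theorem bounded_iff_dcompact_neg_general (ρ : ℕ → ℝ) (hpos : ∀ n, 0 < ρ n)
    (htop : Tendsto ρ atTop atTop)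
    (hratio : ∃ C : ℝ, ∀ᶠ n in atTop, ρ n / (n : ℝ) ≤ C)
    (A : Set ℝ) :
    Bornology.IsBounded A ↔ DCompact ρ A ∧ DCompact ρ (-A) := by
  constructor
  · intro hA
    exact ⟨.of_isBounded hpos htop hA, .of_isBounded hpos htop hA.neg⟩
  · rintro ⟨hA, hnegA⟩
    rw [isBounded_iff_bddBelow_bddAbove, ← bddAbove_neg]
    exact ⟨hnegA.bddAbove hpos hratio, hA.bddAbove hpos hratio⟩

theorem bounded_iff_dcompact_neg (ρ : ℕ → ℝ) (hpos : ∀ n, 0 < ρ n) (hmono : Monotone ρ)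
    (htop : Tendsto ρ atTop atTop)
    (hratio : ∃ C : ℝ, ∀ᶠ n in atTop, ρ n / (n : ℝ) ≤ C)
    (hdiff : ∃ M : ℝ, ∀ n, |ρ (n + 1) - ρ n| ≤ M) (A : Set ℝ) :
    Bornology.IsBounded A ↔ DCompact ρ A ∧ DCompact ρ (-A) :=
  bounded_iff_dcompact_neg_general ρ hpos htop hratio A
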